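/- Let n : ℕ and let A be a symmetric n×n matrix over ℤ/4ℤ with IsUnit A.det. Then the fourth power of the Gauss sum satisfies S(A)⁴ = (−1)^n · 2^(6·n). -/

import Mathlib

/-!
Write `Q x = x ⬝ᵥ A *ᵥ x` and `ψ a = i ^ a`. Substituting `y = x + z` in `S² = ∑ ψ (Q x + Q y)`
and using `2 Q x = 2 (diag A ⬝ᵥ x)` (off-diagonal terms pair up mod 2) turns the inner sum over
`x` into a character sum, which vanishes unless `2 (diag A + A z) = 0`. Modulo 2 this says that
`z` lifts the characteristic vector `w₀ = B⁻¹ (diag B)` of `B = A mod 2`. `Q` is constant on the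
`2ⁿ` lifts of `w₀`, so `S² = 8ⁿ ψ (Q w)` for any lift `w`, and
`Q w ≡ w₀ ⬝ᵥ B w₀ = diag B ⬝ᵥ B⁻¹ diag B = tr (B B⁻¹) = n (mod 2)`, whence `ψ (Q w)² = (-1)ⁿ`.
-/

open Matrix Finset

theorem AddChar.map_sum_eq_prod {A M ι : Type*} [AddCommMonoid A] [CommMonoid M]
    (ψ : AddChar A M) (s : Finset ι) (f : ι → A) : ψ (∑ i ∈ s, f i) = ∏ i ∈ s, ψ (f i) :=
  map_prod ψ.toMonoidHom (fun i => Multiplicative.ofAdd (f i)) s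

theorem AddChar.IsPrimitive.sum_dotProduct {R R' ι : Type*} [CommRing R] [Fintype R]
    [DecidableEq R] [CommRing R'] [IsDomain R'] [Fintype ι] [DecidableEq ι] {ψ : AddChar R R'}
    (hψ : ψ.IsPrimitive) (c : ι → R) :
    ∑ x : ι → R, ψ (c ⬝ᵥ x) = if c = 0 then (Fintype.card R : R') ^ Fintype.card ι else 0 := by
  simp_rw [dotProduct, ψ.map_sum_eq_prod]
  rw [← Fintype.prod_sum (fun i t => ψ (c i * t))]
  simp_rw [mul_comm (c _), AddChar.sum_mulShift _ hψ, Nat.cast_ite, Nat.cast_zero]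
  rw [Fintype.prod_ite_zero, prod_const, card_univ]
  exact if_congr funext_iff.symm rfl rfl

theorem Matrix.IsSymm.add_dotProduct_mulVec_add {ι R : Type*} [Fintype ι] [CommRing R]
    {A : Matrix ι ι R} (hA : A.IsSymm) (x z : ι → R) :
    (x + z) ⬝ᵥ A *ᵥ (x + z) = x ⬝ᵥ A *ᵥ x + z ⬝ᵥ A *ᵥ z + 2 * (x ⬝ᵥ A *ᵥ z) := by
  have hzx : z ⬝ᵥ A *ᵥ x = x ⬝ᵥ A *ᵥ z := by
    rw [dotProduct_mulVec, ← mulVec_transpose, hA.eq, dotProduct_comm]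
  rw [mulVec_add, dotProduct_add, add_dotProduct, add_dotProduct, hzx]
  ring

theorem CharTwo.sum_sum_eq_sum_diag {ι R : Type*} [Fintype ι] [Ring R] [CharP R 2]
    (f : ι → ι → R) (hf : ∀ i j, f i j = f j i) : ∑ i, ∑ j, f i j = ∑ i, f i i := by
  classical
  rw [← sum_product' univ univ, ← diag_union_offDiag, sum_union (disjoint_diag_offDiag _),
    sum_diag, add_eq_left]
  refine sum_involution (fun p _ => p.swap) (fun p _ => ?_) (fun p hp _ => ?_)
    (fun p hp => by simpa [eq_comm] using hp) (fun p _ => Prod.swap_swap p)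
  · rw [Prod.fst_swap, Prod.snd_swap, hf p.2 p.1, CharTwo.add_self_eq_zero]
  · exact fun h => (mem_offDiag.mp hp).2.2 (congrArg Prod.snd h)

theorem Matrix.IsSymm.dotProduct_mulVec_self_of_charTwo {ι R : Type*} [Fintype ι] [CommRing R]
    [CharP R 2] {M : Matrix ι ι R} (hM : M.IsSymm) (y : ι → R) :
    y ⬝ᵥ M *ᵥ y = ∑ i, M i i * y i ^ 2 := by
  have h := CharTwo.sum_sum_eq_sum_diag (fun i j => y i * (M i j * y j))
    (fun i j => by rw [hM.apply i j]; ring)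
  simp only [dotProduct, mulVec, mul_sum] at h ⊢
  rw [h]
  exact sum_congr rfl fun i _ => by ring

theorem Matrix.IsSymm.dotProduct_mulVec_self_zmod_two {ι : Type*} [Fintype ι]
    {M : Matrix ι ι (ZMod 2)} (hM : M.IsSymm) (y : ι → ZMod 2) :
    y ⬝ᵥ M *ᵥ y = M.diag ⬝ᵥ y := by
  rw [hM.dotProduct_mulVec_self_of_charTwo]
  simp only [ZMod.pow_card, dotProduct, diag]

theorem Matrix.IsSymm.diag_dotProduct_inv_mulVec_diag {ι : Type*} [Fintype ι] [DecidableEq ι]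
    {B : Matrix ι ι (ZMod 2)} (hB : B.IsSymm) (hdet : IsUnit B.det) :
    B.diag ⬝ᵥ B⁻¹ *ᵥ B.diag = Fintype.card ι := by
  rw [hB.inv.dotProduct_mulVec_self_zmod_two, ← trace_one, ← mul_nonsing_inv B hdet]
  simp only [trace, diag, mul_apply, dotProduct]
  rw [CharTwo.sum_sum_eq_sum_diag (fun i j => B i j * B⁻¹ j i)
    (fun i j => by rw [hB.apply i j, hB.inv.apply i j])]
  exact sum_congr rfl fun i _ => mul_comm _ _

theorem RingHom.comp_mulVec {ι κ R S : Type*} [Fintype κ] [NonAssocSemiring R]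
    [NonAssocSemiring S] (f : R →+* S) (M : Matrix ι κ R) (v : κ → R) :
    f ∘ (M *ᵥ v) = M.map f *ᵥ (f ∘ v) :=
  funext (f.map_mulVec M v)

noncomputable def iChar : AddChar (ZMod 4) ℂ := AddChar.zmodChar 4 Complex.I_pow_four

theorem iChar_apply (a : ZMod 4) : iChar a = Complex.I ^ a.val := rfl

theorem isPrimitive_iChar : iChar.IsPrimitive :=
  AddChar.zmodChar_primitive_of_primitive_root 4 Complex.isPrimitiveRoot_I

def toZModTwo : ZMod 4 →+* ZMod 2 := ZMod.castHom (by norm_num) (ZMod 2)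

theorem two_mul_eq_two_mul_iff : ∀ a b : ZMod 4, 2 * a = 2 * b ↔ toZModTwo a = toZModTwo b := by
  decide

theorem two_mul_eq_zero_iff : ∀ a : ZMod 4, 2 * a = 0 ↔ toZModTwo a = 0 := by
  decide

theorem exists_eq_add_two_mul_of_toZModTwo_eq :
    ∀ a b : ZMod 4, toZModTwo a = toZModTwo b → ∃ c, a = b + 2 * c := by
  decide

theorem card_filter_toZModTwo_eq : ∀ b : ZMod 2, #{a : ZMod 4 | toZModTwo a = b} = 2 := by
  decide

theorem iChar_sq_of_toZModTwo_eq {a : ZMod 4} {n : ℕ} (h : toZModTwo a = n) :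
    iChar a ^ 2 = (-1) ^ n := by
  have h2a : 2 * a = n • 2 := by
    rw [nsmul_eq_mul, mul_comm (n : ZMod 4), two_mul_eq_two_mul_iff, h, map_natCast]
  rw [← AddChar.map_nsmul_eq_pow, nsmul_eq_mul, Nat.cast_ofNat, h2a, AddChar.map_nsmul_eq_pow,
    iChar_apply, show (2 : ZMod 4).val = 2 from rfl, Complex.I_sq]

theorem card_filter_toZModTwo_comp_eq {ι : Type*} [Fintype ι] [DecidableEq ι] (y : ι → ZMod 2) :
    #{z : ι → ZMod 4 | toZModTwo ∘ z = y} = 2 ^ Fintype.card ι := by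
  have hpi : ({z | toZModTwo ∘ z = y} : Finset (ι → ZMod 4))
      = Fintype.piFinset fun i => {a | toZModTwo a = y i} := by
    ext z
    simp [Fintype.mem_piFinset, funext_iff]
  rw [hpi, Fintype.card_piFinset]
  simp [card_filter_toZModTwo_eq]

noncomputable def gaussSum4 {ι : Type*} [Fintype ι] [DecidableEq ι] (A : Matrix ι ι (ZMod 4)) :
    ℂ :=
  ∑ x, iChar (x ⬝ᵥ A *ᵥ x)

theorem two_smul_diag_add_mulVec_eq_zero_iff {ι : Type*} [Fintype ι] [DecidableEq ι]
    {A : Matrix ι ι (ZMod 4)} (hdet : IsUnit (A.map toZModTwo).det) (z : ι → ZMod 4) :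
    (2 : ZMod 4) • (A.diag + A *ᵥ z) = 0
      ↔ toZModTwo ∘ z = (A.map toZModTwo)⁻¹ *ᵥ (A.map toZModTwo).diag := by
  set B := A.map toZModTwo
  have hred : (2 : ZMod 4) • (A.diag + A *ᵥ z) = 0 ↔ B.diag + B *ᵥ (toZModTwo ∘ z) = 0 := by
    simp only [funext_iff, Pi.smul_apply, Pi.add_apply, Pi.zero_apply, smul_eq_mul,
      two_mul_eq_zero_iff, map_add, RingHom.map_mulVec]
    rfl
  rw [hred, funext_iff]
  simp only [Pi.add_apply, Pi.zero_apply, CharTwo.add_eq_zero, ← funext_iff]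
  constructor
  · intro h
    rw [h, mulVec_mulVec, nonsing_inv_mul _ hdet, one_mulVec]
  · intro h
    rw [h, mulVec_mulVec, mul_nonsing_inv _ hdet, one_mulVec]

namespace Matrix.IsSymm

variable {ι : Type*} [Fintype ι] {A : Matrix ι ι (ZMod 4)}

theorem two_mul_dotProduct_mulVec_self (hA : A.IsSymm) (x : ι → ZMod 4) :
    2 * (x ⬝ᵥ A *ᵥ x) = 2 * (A.diag ⬝ᵥ x) := by
  rw [two_mul_eq_two_mul_iff, RingHom.map_dotProduct, RingHom.map_dotProduct,
    RingHom.comp_mulVec, (hA.map _).dotProduct_mulVec_self_zmod_two]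
  rfl

theorem dotProduct_mulVec_self_eq_of_toZModTwo_comp_eq (hA : A.IsSymm) {z w : ι → ZMod 4}
    (h : toZModTwo ∘ z = toZModTwo ∘ w) : z ⬝ᵥ A *ᵥ z = w ⬝ᵥ A *ᵥ w := by
  choose u hu using fun i => exists_eq_add_two_mul_of_toZModTwo_eq _ _ (congrFun h i)
  obtain rfl : z = w + (2 : ZMod 4) • u := funext hu
  have h4 : (4 : ZMod 4) = 0 := rfl
  rw [hA.add_dotProduct_mulVec_add, mulVec_smul, dotProduct_smul, smul_dotProduct,
    dotProduct_smul, smul_smul, smul_eq_mul, smul_eq_mul]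
  linear_combination (u ⬝ᵥ A *ᵥ u + w ⬝ᵥ A *ᵥ u) * h4

theorem sum_filter_toZModTwo_comp_eq [DecidableEq ι] (hA : A.IsSymm) (w : ι → ZMod 4) :
    ∑ z with toZModTwo ∘ z = toZModTwo ∘ w, iChar (z ⬝ᵥ A *ᵥ z)
      = 2 ^ Fintype.card ι * iChar (w ⬝ᵥ A *ᵥ w) := by
  rw [sum_congr rfl fun z hz => by
      rw [hA.dotProduct_mulVec_self_eq_of_toZModTwo_comp_eq (mem_filter.mp hz).2],
    sum_const, card_filter_toZModTwo_comp_eq, nsmul_eq_mul, Nat.cast_pow, Nat.cast_ofNat]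

theorem gaussSum4_sq [DecidableEq ι] (hA : A.IsSymm) :
    gaussSum4 A ^ 2 = 4 ^ Fintype.card ι *
      ∑ z with (2 : ZMod 4) • (A.diag + A *ᵥ z) = 0, iChar (z ⬝ᵥ A *ᵥ z) := by
  have hexp : ∀ x z : ι → ZMod 4, x ⬝ᵥ A *ᵥ x + (x + z) ⬝ᵥ A *ᵥ (x + z)
      = z ⬝ᵥ A *ᵥ z + ((2 : ZMod 4) • (A.diag + A *ᵥ z)) ⬝ᵥ x := by
    intro x z
    rw [hA.add_dotProduct_mulVec_add, smul_dotProduct, add_dotProduct, dotProduct_comm (A *ᵥ z),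
      smul_eq_mul, mul_add, ← hA.two_mul_dotProduct_mulVec_self]
    ring
  calc gaussSum4 A ^ 2 = ∑ x, ∑ z, iChar (x ⬝ᵥ A *ᵥ x + (x + z) ⬝ᵥ A *ᵥ (x + z)) := by
        rw [sq, gaussSum4, sum_mul_sum]
        refine sum_congr rfl fun x _ => ?_
        rw [← Equiv.sum_comp (Equiv.addLeft x)]
        simp only [Equiv.coe_addLeft, AddChar.map_add_eq_mul]
    _ = ∑ z, iChar (z ⬝ᵥ A *ᵥ z) * ∑ x, iChar (((2 : ZMod 4) • (A.diag + A *ᵥ z)) ⬝ᵥ x) := by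
        rw [sum_comm]
        simp_rw [hexp, AddChar.map_add_eq_mul, ← mul_sum]
    _ = _ := by
        simp_rw [isPrimitive_iChar.sum_dotProduct, mul_ite, mul_zero, sum_ite, sum_const_zero,
          add_zero, ← sum_mul, ZMod.card, Nat.cast_ofNat]
        exact mul_comm _ _

theorem gaussSum4_sq_eq [DecidableEq ι] (hA : A.IsSymm) (hdet : IsUnit (A.map toZModTwo).det)
    {w : ι → ZMod 4} (hw : toZModTwo ∘ w = (A.map toZModTwo)⁻¹ *ᵥ (A.map toZModTwo).diag) :
    gaussSum4 A ^ 2 = 8 ^ Fintype.card ι * iChar (w ⬝ᵥ A *ᵥ w) := by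
  rw [hA.gaussSum4_sq, filter_congr fun z _ => two_smul_diag_add_mulVec_eq_zero_iff hdet z, ← hw,
    hA.sum_filter_toZModTwo_comp_eq, ← mul_assoc, ← mul_pow]
  norm_num

theorem toZModTwo_dotProduct_mulVec_self [DecidableEq ι] (hA : A.IsSymm)
    (hdet : IsUnit (A.map toZModTwo).det) {w : ι → ZMod 4}
    (hw : toZModTwo ∘ w = (A.map toZModTwo)⁻¹ *ᵥ (A.map toZModTwo).diag) :
    toZModTwo (w ⬝ᵥ A *ᵥ w) = Fintype.card ι := by
  rw [RingHom.map_dotProduct, RingHom.comp_mulVec, hw, mulVec_mulVec, mul_nonsing_inv _ hdet,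
    one_mulVec, dotProduct_comm, (hA.map _).diag_dotProduct_inv_mulVec_diag hdet]

end Matrix.IsSymm

/-- For a symmetric matrix `A` over `ℤ/4ℤ` with invertible determinant, the
fourth power of the Gauss sum `S(A) = ∑_x i^(xᵀAx).val` equals `(-1)^n · 2^(6n)`. -/
theorem stmt_13 (n : ℕ) (A : Matrix (Fin n) (Fin n) (ZMod 4))
    (hsymm : A.IsSymm) (hdet : IsUnit A.det) :
    (∑ x : Fin n → ZMod 4, Complex.I ^ (dotProduct x (A.mulVec x)).val) ^ 4
      = (-1) ^ n * 2 ^ (6 * n) := by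
  have hdet₂ : IsUnit (A.map toZModTwo).det := by
    simpa only [RingHom.map_det, RingHom.mapMatrix_apply] using hdet.map toZModTwo
  obtain ⟨w, hw⟩ := (ZMod.ringHom_surjective toZModTwo).comp_left
    ((A.map toZModTwo)⁻¹ *ᵥ (A.map toZModTwo).diag)
  have hsq := hsymm.gaussSum4_sq_eq hdet₂ hw
  have hpar := hsymm.toZModTwo_dotProduct_mulVec_self hdet₂ hw
  rw [Fintype.card_fin] at hsq hpar
  calc (∑ x : Fin n → ZMod 4, Complex.I ^ (x ⬝ᵥ A *ᵥ x).val) ^ 4 = (gaussSum4 A ^ 2) ^ 2 := by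
        rw [← pow_mul]; rfl
    _ = (-1) ^ n * 2 ^ (6 * n) := by
        rw [hsq, mul_pow, iChar_sq_of_toZModTwo_eq hpar, ← pow_mul, mul_comm,
          show (8 : ℂ) = 2 ^ 3 by norm_num, ← pow_mul]
        ring_nf
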